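/- arXiv:2001.01296 — 2 statements merged into one kernel-verified Lean document; each statement's English description precedes it below -/
import Mathlib

section
/- If a diversity measure D : Δ* → ℝ⁺ on probability simplices is symmetric (invariant under permutations of the coordinates), expansible (invariant under appending a zero coordinate), and satisfies the Pigou–Dalton transfer principle (transferring ε ≤ (p_i − p_j)/2 from a larger coordinate p_i to a smaller p_j does not decrease D), then merging two coordinates does not increase diversity: D(…, p_i, p_{i+1}, …) ≥ D(…, p_i + p_{i+1}, …), where the right-hand side has one fewer coordinate. -/
/-!
Append a zero coordinate to the merged tuple, which leaves `D` unchanged by expansibility, and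
transfer the smaller `m` of the two merged masses `a, b` from `a + b` to that zero; this is
admissible since `m ≤ (a + b) / 2`. The result is a rearrangement of the original tuple, so by
symmetry it has the same diversity.
-/

open Function

theorem Fin.exists_perm_comp_eq_snoc_removeNth {α : Type*} {n : ℕ} (p : Fin (n + 1) → α)
    (x : Fin (n + 1)) : ∃ σ : Equiv.Perm (Fin (n + 1)), p ∘ σ = Fin.snoc (x.removeNth p) (p x) := by
  refine ⟨finSuccEquivLast.trans (finSuccEquiv' x).symm, funext fun j => ?_⟩
  refine Fin.lastCases ?_ (fun j => ?_) j <;>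
    simp [finSuccEquivLast_castSucc, Fin.removeNth]

theorem Fin.update_removeNth_succ {α : Type*} {n : ℕ} (p : Fin (n + 1) → α) (i : Fin n)
    (c : α) : update (i.succ.removeNth p) i c = update (i.castSucc.removeNth p) i c := by
  funext j
  rcases lt_trichotomy j i with h | rfl | h
  · simp [h.ne, Fin.removeNth, Fin.succAbove_succ_of_le _ _ h.le,
      Fin.succAbove_castSucc_of_lt _ _ h]
  · simp
  · simp [h.ne', Fin.removeNth, Fin.succAbove_succ_of_lt _ _ h,
      Fin.succAbove_castSucc_of_le _ _ h.le]

theorem Finset.sum_univ_update_self_add {ι M : Type*} [Fintype ι] [DecidableEq ι]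
    [AddCommMonoid M] (p : ι → M) (i : ι) (b : M) :
    ∑ j, update p i (p i + b) j = ∑ j, p j + b := by
  rw [Finset.sum_update_of_mem (Finset.mem_univ i), Finset.sdiff_singleton_eq_erase,
    ← Finset.add_sum_erase _ _ (Finset.mem_univ i)]
  abel

section stdSimplex

variable {𝕜 : Type*} [Semiring 𝕜] [PartialOrder 𝕜]

theorem comp_equiv_mem_stdSimplex {ι ι' : Type*} [Fintype ι] [Fintype ι'] {p : ι → 𝕜}
    (hp : p ∈ stdSimplex 𝕜 ι) (σ : ι' ≃ ι) : p ∘ σ ∈ stdSimplex 𝕜 ι' :=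
  ⟨fun j => hp.1 (σ j), by rw [← hp.2]; exact σ.sum_comp p⟩

theorem Fin.snoc_mem_stdSimplex_iff {n : ℕ} {p : Fin n → 𝕜} {b : 𝕜} :
    Fin.snoc p b ∈ stdSimplex 𝕜 (Fin (n + 1)) ↔ (∀ j, 0 ≤ p j) ∧ 0 ≤ b ∧ ∑ j, p j + b = 1 := by
  simp [stdSimplex, Fin.forall_fin_succ', Fin.sum_snoc, and_assoc]

theorem Fin.snoc_zero_mem_stdSimplex {n : ℕ} {p : Fin n → 𝕜} (hp : p ∈ stdSimplex 𝕜 (Fin n)) :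
    Fin.snoc p 0 ∈ stdSimplex 𝕜 (Fin (n + 1)) :=
  Fin.snoc_mem_stdSimplex_iff.2 ⟨hp.1, le_rfl, by rw [add_zero, hp.2]⟩

theorem Fin.update_add_mem_stdSimplex [IsOrderedAddMonoid 𝕜] {n : ℕ} {p : Fin n → 𝕜} {b : 𝕜}
    (i : Fin n) (hp : Fin.snoc p b ∈ stdSimplex 𝕜 (Fin (n + 1))) :
    update p i (p i + b) ∈ stdSimplex 𝕜 (Fin n) := by
  obtain ⟨hnn, hb, hsum⟩ := Fin.snoc_mem_stdSimplex_iff.1 hp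
  refine ⟨fun j => ?_, by rw [Finset.sum_univ_update_self_add, hsum]⟩
  rcases eq_or_ne j i with rfl | h
  · simpa using add_nonneg (hnn j) hb
  · simpa [h] using hnn j

end stdSimplex

namespace DiversityMeasure

variable (D : ∀ k : ℕ, (Fin k → ℝ) → ℝ)

def IsSymmetric : Prop :=
  ∀ (k : ℕ) (p : Fin k → ℝ) (σ : Equiv.Perm (Fin k)),
    p ∈ stdSimplex ℝ (Fin k) → D k (p ∘ σ) = D k p

def IsExpansible : Prop :=
  ∀ (k : ℕ) (p : Fin k → ℝ), p ∈ stdSimplex ℝ (Fin k) → D (k + 1) (Fin.snoc p 0) = D k p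

def SatisfiesTransfer : Prop :=
  ∀ (k : ℕ) (p : Fin k → ℝ) (i j : Fin k) (ε : ℝ), p ∈ stdSimplex ℝ (Fin k) →
    p j < p i → 0 ≤ ε → ε ≤ (p i - p j) / 2 →
    D k p ≤ D k (update (update p i (p i - ε)) j (p j + ε))

variable {D}

theorem update_add_le_snoc (hexp : IsExpansible D) (htrans : SatisfiesTransfer D) {k : ℕ}
    {g : Fin k → ℝ} {b : ℝ} (i : Fin k) (hb : b ≤ g i)
    (hg : Fin.snoc g b ∈ stdSimplex ℝ (Fin (k + 1))) :
    D k (update g i (g i + b)) ≤ D (k + 1) (Fin.snoc g b) := by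
  set q := update g i (g i + b)
  have hq : q ∈ stdSimplex ℝ (Fin k) := Fin.update_add_mem_stdSimplex i hg
  obtain ⟨hgi, hb₀, -⟩ := Fin.snoc_mem_stdSimplex_iff.1 hg
  rcases hb₀.eq_or_lt with rfl | hb₀
  · have hqg : q = g := by simp [q]
    rw [hqg] at hq ⊢
    exact (hexp k g hq).ge
  set Q : Fin (k + 1) → ℝ := Fin.snoc q 0
  have hQi : Q i.castSucc = g i + b := by simp [Q, q]
  have hQlast : Q (Fin.last k) = 0 := by simp [Q]
  calc D k q = D (k + 1) Q := (hexp k q hq).symm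
    _ ≤ D (k + 1) (update (update Q i.castSucc (Q i.castSucc - b)) (Fin.last k)
          (Q (Fin.last k) + b)) :=
        htrans _ Q _ _ b (Fin.snoc_zero_mem_stdSimplex hq) (by linarith [hgi i]) hb₀.le
          (by linarith)
    _ = D (k + 1) (Fin.snoc g b) := by
        rw [hQi, hQlast, ← Fin.snoc_update, Fin.update_snoc_last]
        simp [q]

theorem merge_removeNth_le (hsymm : IsSymmetric D) (hexp : IsExpansible D)
    (htrans : SatisfiesTransfer D) {k : ℕ} {p : Fin (k + 1) → ℝ}
    (hp : p ∈ stdSimplex ℝ (Fin (k + 1))) (x : Fin (k + 1)) (i : Fin k)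
    (hx : p x ≤ x.removeNth p i) :
    D k (update (x.removeNth p) i (x.removeNth p i + p x)) ≤ D (k + 1) p := by
  obtain ⟨σ, hσ⟩ := Fin.exists_perm_comp_eq_snoc_removeNth p x
  rw [← hsymm _ p σ hp, hσ]
  exact update_add_le_snoc hexp htrans i hx (hσ ▸ comp_equiv_mem_stdSimplex hp σ)

end DiversityMeasure

theorem merging_general
    (D : ∀ k : ℕ, (Fin k → ℝ) → ℝ)
    (hsymm : ∀ (k : ℕ) (p : Fin k → ℝ) (σ : Equiv.Perm (Fin k)),
      (∀ i, 0 ≤ p i) → ∑ i, p i = 1 → D k (p ∘ σ) = D k p)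
    (hexp : ∀ (k : ℕ) (p : Fin k → ℝ),
      (∀ i, 0 ≤ p i) → ∑ i, p i = 1 → D (k + 1) (Fin.snoc p 0) = D k p)
    (htrans : ∀ (k : ℕ) (p : Fin k → ℝ) (i j : Fin k) (ε : ℝ),
      (∀ i, 0 ≤ p i) → ∑ i, p i = 1 → p j < p i → 0 ≤ ε → ε ≤ (p i - p j) / 2 →
      D k p ≤ D k (Function.update (Function.update p i (p i - ε)) j (p j + ε)))
    (k : ℕ) (p : Fin (k + 1) → ℝ) (hp : ∀ i, 0 ≤ p i) (hs : ∑ i, p i = 1)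
    (i : Fin k) :
    D k (fun j => if j = i then p i.castSucc + p i.succ else p (Fin.succAbove i.succ j))
      ≤ D (k + 1) p := by
  have hD₁ : DiversityMeasure.IsSymmetric D := fun k p σ hp => hsymm k p σ hp.1 hp.2
  have hD₂ : DiversityMeasure.IsExpansible D := fun k p hp => hexp k p hp.1 hp.2
  have hD₃ : DiversityMeasure.SatisfiesTransfer D := fun k p i j ε hp =>
    htrans k p i j ε hp.1 hp.2
  have hmerged : (fun j => if j = i then p i.castSucc + p i.succ else p (i.succ.succAbove j)) =
      update (i.succ.removeNth p) i (p i.castSucc + p i.succ) := by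
    funext j
    simp [update_apply, Fin.removeNth]
  rw [hmerged]
  rcases le_total (p i.succ) (p i.castSucc) with h | h
  · simpa [Fin.removeNth] using
      DiversityMeasure.merge_removeNth_le hD₁ hD₂ hD₃ ⟨hp, hs⟩ i.succ i
        (by simpa [Fin.removeNth])
  · rw [Fin.update_removeNth_succ, add_comm (p _)]
    simpa [Fin.removeNth] using
      DiversityMeasure.merge_removeNth_le hD₁ hD₂ hD₃ ⟨hp, hs⟩ i.castSucc i
        (by simpa [Fin.removeNth])

/-- Merging: a symmetric, expansible diversity measure satisfying the
Pigou–Dalton transfer principle does not increase when two adjacent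
coordinates are merged. -/
theorem merging
    (D : ∀ k : ℕ, (Fin k → ℝ) → ℝ)
    (hnn : ∀ (k : ℕ) (p : Fin k → ℝ), (∀ i, 0 ≤ p i) → ∑ i, p i = 1 → 0 ≤ D k p)
    (hsymm : ∀ (k : ℕ) (p : Fin k → ℝ) (σ : Equiv.Perm (Fin k)),
      (∀ i, 0 ≤ p i) → ∑ i, p i = 1 → D k (p ∘ σ) = D k p)
    (hexp : ∀ (k : ℕ) (p : Fin k → ℝ),
      (∀ i, 0 ≤ p i) → ∑ i, p i = 1 → D (k + 1) (Fin.snoc p 0) = D k p)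
    (htrans : ∀ (k : ℕ) (p : Fin k → ℝ) (i j : Fin k) (ε : ℝ),
      (∀ i, 0 ≤ p i) → ∑ i, p i = 1 → p j < p i → 0 ≤ ε → ε ≤ (p i - p j) / 2 →
      D k p ≤ D k (Function.update (Function.update p i (p i - ε)) j (p j + ε)))
    (k : ℕ) (p : Fin (k + 1) → ℝ) (hp : ∀ i, 0 ≤ p i) (hs : ∑ i, p i = 1)
    (i : Fin k) :
    D k (fun j => if j = i then p i.castSucc + p i.succ else p (Fin.succAbove i.succ j))
      ≤ D (k + 1) p :=
  merging_general D hsymm hexp htrans k p hp hs i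
end

section
/- If a diversity measure D satisfies symmetry, expansibility, the transfer principle, and normalization (D(1/k,…,1/k) = k for all k), then for every p ∈ Δ^{k-1} one has 1 ≤ D(p) ≤ k. -/
/-!
Every probability vector other than a point mass is reached by a single Robin Hood transfer
from a vector with one more zero coordinate (move all of the mass of a nonzero coordinate onto
a largest one), so by induction on the support its diversity is at least that of a point mass,
which is `1` by expansibility, symmetry and normalization at `k = 1`. Dually, a transfer of
`min (p i - 1/k) (1/k - p j)` from a coordinate above `1/k` to one below makes one more
coordinate equal to `1/k`, so by induction the diversity is at most that of the uniform
distribution, which is `k`.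
-/

open Finset

namespace Diversity

lemma exists_lt_of_sum_eq_of_ne {ι M : Type*} [Fintype ι] [AddCommMonoid M] [LinearOrder M]
    [IsOrderedCancelAddMonoid M] {f g : ι → M} (hsum : ∑ x, f x = ∑ x, g x) (hne : f ≠ g) :
    ∃ x, g x < f x := by
  by_contra! h
  exact hne <| funext fun x ↦ (sum_eq_sum_iff_of_le fun x _ ↦ h x).1 hsum x (mem_univ x)

lemma eq_single_sum_of_forall_ne_eq_zero {ι M : Type*} [Fintype ι] [DecidableEq ι]
    [AddCommMonoid M] {p : ι → M} {i : ι} (h : ∀ j ≠ i, p j = 0) :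
    p = Pi.single i (∑ x, p x) := by
  rw [sum_eq_single_of_mem i (mem_univ i) fun j _ ↦ h j]
  ext j
  by_cases hji : j = i
  · subst hji; simp
  · simp [hji, h j hji]

lemma snoc_single_zero {n : ℕ} {M : Type*} [Zero M] (i : Fin n) (x : M) :
    (Fin.snoc (Pi.single i x) 0 : Fin (n + 1) → M) = Pi.single i.castSucc x := by
  ext j
  refine Fin.lastCases ?_ (fun j ↦ ?_) j
  · simp [Fin.castSucc_ne_last]
  · simp [Pi.single_apply]

section Transfer

variable {ι : Type*} [DecidableEq ι]

def transfer (p : ι → ℝ) (i j : ι) (ε : ℝ) : ι → ℝ :=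
  Function.update (Function.update p i (p i - ε)) j (p j + ε)

variable {p : ι → ℝ} {i j : ι} {ε : ℝ}

lemma transfer_apply_left (hij : i ≠ j) : transfer p i j ε i = p i - ε := by
  simp [transfer, hij]

lemma transfer_apply_right : transfer p i j ε j = p j + ε := by
  simp [transfer]

lemma transfer_apply_of_ne {x : ι} (hxi : x ≠ i) (hxj : x ≠ j) :
    transfer p i j ε x = p x := by
  simp [transfer, hxi, hxj]

lemma transfer_eq_add_single_sub_single (hij : i ≠ j) :
    transfer p i j ε = p + Pi.single j ε - Pi.single i ε := by
  ext x
  by_cases hxi : x = i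
  · subst hxi; simp [transfer_apply_left hij, hij]
  by_cases hxj : x = j
  · subst hxj; simp [transfer_apply_right, hxi]
  · simp [transfer_apply_of_ne hxi hxj, hxi, hxj]

lemma transfer_transfer (hij : i ≠ j) : transfer (transfer p i j ε) j i ε = p := by
  rw [transfer_eq_add_single_sub_single hij.symm, transfer_eq_add_single_sub_single hij]
  abel

lemma transfer_nonneg (hp : ∀ x, 0 ≤ p x) (hε : 0 ≤ ε) (hεi : ε ≤ p i) (x : ι) :
    0 ≤ transfer p i j ε x := by
  simp only [transfer, Function.update_apply]
  split_ifs <;> linarith [hp x, hp j]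

variable [Fintype ι]

lemma sum_transfer (hij : i ≠ j) : ∑ x, transfer p i j ε x = ∑ x, p x := by
  simp [transfer_eq_add_single_sub_single hij, sum_add_distrib, sum_sub_distrib]

lemma card_filter_transfer_ne_lt {c : ℝ} (hi : p i ≠ c) (hj : p j ≠ c)
    (hc : transfer p i j ε i = c ∨ transfer p i j ε j = c) :
    #{x | transfer p i j ε x ≠ c} < #{x | p x ≠ c} := by
  have hsub : univ.filter (transfer p i j ε · ≠ c) ⊆ univ.filter (p · ≠ c) := by
    intro x
    simp only [mem_filter, mem_univ, true_and]
    intro hx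
    by_cases hxi : x = i
    · exact hxi ▸ hi
    by_cases hxj : x = j
    · exact hxj ▸ hj
    rwa [transfer_apply_of_ne hxi hxj] at hx
  refine card_lt_card ((ssubset_iff_of_subset hsub).2 ?_)
  rcases hc with hc | hc
  · exact ⟨i, by simp [hi], by simp [hc]⟩
  · exact ⟨j, by simp [hj], by simp [hc]⟩

end Transfer

variable (D : ∀ k : ℕ, (Fin k → ℝ) → ℝ)

def IsSymmetric : Prop :=
  ∀ (k : ℕ) (p : Fin k → ℝ) (σ : Equiv.Perm (Fin k)),
    (∀ i, 0 ≤ p i) → ∑ i, p i = 1 → D k (p ∘ σ) = D k p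

def IsExpansible : Prop :=
  ∀ (k : ℕ) (p : Fin k → ℝ),
    (∀ i, 0 ≤ p i) → ∑ i, p i = 1 → D (k + 1) (Fin.snoc p 0) = D k p

def SatisfiesTransfer : Prop :=
  ∀ (k : ℕ) (p : Fin k → ℝ) (i j : Fin k) (ε : ℝ),
    (∀ i, 0 ≤ p i) → ∑ i, p i = 1 → p j < p i → 0 ≤ ε → ε ≤ (p i - p j) / 2 →
    D k p ≤ D k (transfer p i j ε)

def IsNormalized : Prop :=
  ∀ k : ℕ, 0 < k → D k (fun _ ↦ (k : ℝ)⁻¹) = k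

variable {D}

lemma diversity_single_zero (hexp : IsExpansible D) (hnorm : IsNormalized D) (n : ℕ) :
    D (n + 1) (Pi.single 0 1) = 1 := by
  induction n with
  | zero =>
    have hunif : (Pi.single 0 1 : Fin 1 → ℝ) = fun _ ↦ ((1 : ℕ) : ℝ)⁻¹ := by
      ext i; simp [Subsingleton.elim i 0]
    rw [hunif, hnorm 1 one_pos, Nat.cast_one]
  | succ n ih =>
    rw [← Fin.castSucc_zero, ← snoc_single_zero,
      hexp _ _ (fun x ↦ by simp [Pi.single_apply]; positivity) (by simp), ih]

lemma diversity_single (hsymm : IsSymmetric D) (hexp : IsExpansible D) (hnorm : IsNormalized D)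
    {k : ℕ} (z : Fin k) : D k (Pi.single z 1) = 1 := by
  obtain _ | n := k
  · exact z.elim0
  have hswap : Pi.single 0 1 ∘ Equiv.swap 0 z = Pi.single z (1 : ℝ) := by
    simp [Pi.single_comp_equiv]
  rw [← hswap, hsymm _ _ _ (fun x ↦ by simp [Pi.single_apply]; positivity) (by simp),
    diversity_single_zero hexp hnorm]

lemma one_le_diversity (htrans : SatisfiesTransfer D) {k : ℕ}
    (hsingle : ∀ z : Fin k, D k (Pi.single z 1) = 1) {p : Fin k → ℝ} (hp : ∀ i, 0 ≤ p i)
    (hs : ∑ i, p i = 1) : 1 ≤ D k p := by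
  induction hn : #{x | p x ≠ 0} using Nat.strong_induction_on generalizing p with
  | _ n ih =>
  obtain ⟨i, -, hmax⟩ := exists_max_image univ p (nonempty_of_sum_ne_zero (hs ▸ one_ne_zero))
  by_cases hconc : ∀ j ≠ i, p j = 0
  · rw [eq_single_sum_of_forall_ne_eq_zero hconc, hs, hsingle]
  push Not at hconc
  obtain ⟨j, hji, hj⟩ := hconc
  have hpj : 0 < p j := (hp j).lt_of_ne' hj
  have hpi : 0 < p i := hpj.trans_le (hmax j (mem_univ j))
  set q := transfer p j i (p j)
  have hq_nonneg : ∀ x, 0 ≤ q x := transfer_nonneg hp hpj.le le_rfl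
  have hq_sum : ∑ x, q x = 1 := (sum_transfer hji).trans hs
  have hqi : q i = p i + p j := transfer_apply_right
  have hqj : q j = 0 := by simp [q, transfer_apply_left hji]
  have hfewer : #{x | q x ≠ 0} < n := hn ▸ card_filter_transfer_ne_lt hj hpi.ne' (.inl hqj)
  calc 1 ≤ D k q := ih _ hfewer hq_nonneg hq_sum rfl
    _ ≤ D k (transfer q i j (p j)) :=
        htrans k q i j (p j) hq_nonneg hq_sum (by linarith) hpj.le
          (by linarith [hmax j (mem_univ j)])
    _ = D k p := by rw [transfer_transfer hji]

lemma diversity_le_card (htrans : SatisfiesTransfer D) (hnorm : IsNormalized D) {k : ℕ}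
    {p : Fin k → ℝ} (hp : ∀ i, 0 ≤ p i) (hs : ∑ i, p i = 1) : D k p ≤ k := by
  have hk : 0 < k :=
    Fin.pos_iff_nonempty.2 (univ_nonempty_iff.1 (nonempty_of_sum_ne_zero (hs ▸ one_ne_zero)))
  set m : ℝ := (k : ℝ)⁻¹
  have hm_sum : ∑ _ : Fin k, m = 1 := by simp [m, hk.ne']
  induction hn : #{x | p x ≠ m} using Nat.strong_induction_on generalizing p with
  | _ n ih =>
  by_cases hunif : p = fun _ ↦ m
  · rw [hunif, hnorm k hk]
  obtain ⟨i, hi⟩ := exists_lt_of_sum_eq_of_ne (hs.trans hm_sum.symm) hunif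
  obtain ⟨j, hj⟩ := exists_lt_of_sum_eq_of_ne (hm_sum.trans hs.symm) (Ne.symm hunif)
  have hij : i ≠ j := fun h ↦ (hj.trans hi).ne (by rw [h])
  set ε := min (p i - m) (m - p j)
  have hε_nonneg : 0 ≤ ε := le_min (by linarith) (by linarith)
  have hε_le : ε ≤ p i - m := min_le_left _ _
  set q := transfer p i j ε
  have hq_nonneg : ∀ x, 0 ≤ q x := transfer_nonneg hp hε_nonneg (by linarith [hp j])
  have hq_sum : ∑ x, q x = 1 := (sum_transfer hij).trans hs
  have hhit : q i = m ∨ q j = m := by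
    simp only [q, transfer_apply_left hij, transfer_apply_right, ε]
    rcases le_total (p i - m) (m - p j) with h | h
    · left; rw [min_eq_left h]; ring
    · right; rw [min_eq_right h]; ring
  have hfewer : #{x | q x ≠ m} < n := hn ▸ card_filter_transfer_ne_lt hi.ne' hj.ne hhit
  calc D k p ≤ D k q :=
        htrans k p i j ε hp hs (hj.trans hi) hε_nonneg
          (by linarith [min_le_right (p i - m) (m - p j)])
    _ ≤ k := ih _ hfewer hq_nonneg hq_sum rfl

end Diversity

open Diversity in
theorem bounds_for_diversity_values_general
    (D : ∀ k : ℕ, (Fin k → ℝ) → ℝ)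
    (hsymm : ∀ (k : ℕ) (p : Fin k → ℝ) (σ : Equiv.Perm (Fin k)),
      (∀ i, 0 ≤ p i) → ∑ i, p i = 1 → D k (p ∘ σ) = D k p)
    (hexp : ∀ (k : ℕ) (p : Fin k → ℝ),
      (∀ i, 0 ≤ p i) → ∑ i, p i = 1 → D (k + 1) (Fin.snoc p 0) = D k p)
    (htrans : ∀ (k : ℕ) (p : Fin k → ℝ) (i j : Fin k) (ε : ℝ),
      (∀ i, 0 ≤ p i) → ∑ i, p i = 1 → p j < p i → 0 ≤ ε → ε ≤ (p i - p j) / 2 →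
      D k p ≤ D k (Function.update (Function.update p i (p i - ε)) j (p j + ε)))
    (hnorm : ∀ k : ℕ, 0 < k → D k (fun _ => (k : ℝ)⁻¹) = k)
    (k : ℕ) (p : Fin k → ℝ) (hp : ∀ i, 0 ≤ p i) (hs : ∑ i, p i = 1) :
    1 ≤ D k p ∧ D k p ≤ k :=
  ⟨one_le_diversity htrans (diversity_single hsymm hexp hnorm) hp hs,
    diversity_le_card htrans hnorm hp hs⟩

/-- Bounds for diversity values: with normalization, any diversity value lies
between 1 and the number of coordinates. -/
theorem bounds_for_diversity_values
    (D : ∀ k : ℕ, (Fin k → ℝ) → ℝ)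
    (hsymm : ∀ (k : ℕ) (p : Fin k → ℝ) (σ : Equiv.Perm (Fin k)),
      (∀ i, 0 ≤ p i) → ∑ i, p i = 1 → D k (p ∘ σ) = D k p)
    (hexp : ∀ (k : ℕ) (p : Fin k → ℝ),
      (∀ i, 0 ≤ p i) → ∑ i, p i = 1 → D (k + 1) (Fin.snoc p 0) = D k p)
    (htrans : ∀ (k : ℕ) (p : Fin k → ℝ) (i j : Fin k) (ε : ℝ),
      (∀ i, 0 ≤ p i) → ∑ i, p i = 1 → p j < p i → 0 ≤ ε → ε ≤ (p i - p j) / 2 →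
      D k p ≤ D k (Function.update (Function.update p i (p i - ε)) j (p j + ε)))
    (hnorm : ∀ k : ℕ, 0 < k → D k (fun _ => (k : ℝ)⁻¹) = k)
    (k : ℕ) (hk : 0 < k) (p : Fin k → ℝ) (hp : ∀ i, 0 ≤ p i) (hs : ∑ i, p i = 1) :
    1 ≤ D k p ∧ D k p ≤ k :=
  bounds_for_diversity_values_general D hsymm hexp htrans hnorm k p hp hs
end
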